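/- Let A be a k-algebra and let s : H_q⊗A → A⊗H_q be a good left transposition of H_q on A. Then s(σ^{±1}⊗a) = a⊗σ^{±1} for all a ∈ A, and the bijective k-linear map α : A → A defined by s(D_1⊗a) = α(a)⊗D_1 is an algebra homomorphism (hence an algebra automorphism) of A. -/

import Mathlib

open TensorProduct

noncomputable section
namespace Paper

variable {k : Type*} [Field k]

section Combinators

variable {M N P Q M' N' P' M'' : Type*}
  [AddCommMonoid M] [AddCommMonoid N] [AddCommMonoid P] [AddCommMonoid Q]
  [AddCommMonoid M'] [AddCommMonoid N'] [AddCommMonoid P'] [AddCommMonoid M'']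
  [Module k M] [Module k N] [Module k P] [Module k Q]
  [Module k M'] [Module k N'] [Module k P'] [Module k M'']

/-- `(s ⊗ id) ∘ (id ⊗ s)` : braid a pair of factors past `P`. -/
def braidPast (f : N ⊗[k] P →ₗ[k] P ⊗[k] N') (g : M ⊗[k] P →ₗ[k] P ⊗[k] M') :
    (M ⊗[k] N) ⊗[k] P →ₗ[k] P ⊗[k] (M' ⊗[k] N') :=
  (TensorProduct.assoc k P M' N').toLinearMap
    ∘ₗ g.rTensor N'
    ∘ₗ (TensorProduct.assoc k M P N').symm.toLinearMap
    ∘ₗ f.lTensor M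
    ∘ₗ (TensorProduct.assoc k M N P).toLinearMap

def braidUnder (f : M ⊗[k] N →ₗ[k] N' ⊗[k] M') (g : M' ⊗[k] P →ₗ[k] P' ⊗[k] M'') :
    M ⊗[k] (N ⊗[k] P) →ₗ[k] (N' ⊗[k] P') ⊗[k] M'' :=
  (TensorProduct.assoc k N' P' M'').symm.toLinearMap
    ∘ₗ g.lTensor N'
    ∘ₗ (TensorProduct.assoc k N' M' P).toLinearMap
    ∘ₗ f.rTensor P
    ∘ₗ (TensorProduct.assoc k M N P).symm.toLinearMap

def midMap (f : N ⊗[k] P →ₗ[k] P' ⊗[k] N') :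
    (M ⊗[k] N) ⊗[k] (P ⊗[k] Q) →ₗ[k] (M ⊗[k] P') ⊗[k] (N' ⊗[k] Q) :=
  (TensorProduct.assoc k M P' (N' ⊗[k] Q)).symm.toLinearMap
    ∘ₗ ((TensorProduct.assoc k P' N' Q).toLinearMap.lTensor M)
    ∘ₗ ((f.rTensor Q).lTensor M)
    ∘ₗ ((TensorProduct.assoc k N P Q).symm.toLinearMap.lTensor M)
    ∘ₗ (TensorProduct.assoc k M N (P ⊗[k] Q)).toLinearMap

end Combinators

section Hq

variable (k)
variable (H : Type*) [Ring H]

/-- Axiomatisation of the Hopf algebra `H_q`. -/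
structure HqData [HopfAlgebra k H] (q : k) where
  D₁ : H
  D₂ : H
  σ : Hˣ
  D_comm : D₁ * D₂ = D₂ * D₁
  σD₁ : q • ((σ : H) * D₁) = D₁ * (σ : H)
  σD₂ : q • ((σ : H) * D₂) = D₂ * (σ : H)
  comul_D₁ : Coalgebra.comul (R := k) D₁ = D₁ ⊗ₜ[k] (σ : H) + 1 ⊗ₜ[k] D₁
  comul_D₂ : Coalgebra.comul (R := k) D₂ = D₂ ⊗ₜ[k] (1 : H) + (σ : H) ⊗ₜ[k] D₂
  comul_σ : Coalgebra.comul (R := k) ((σ : H)) = (σ : H) ⊗ₜ[k] (σ : H)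
  counit_D₁ : Coalgebra.counit (R := k) D₁ = 0
  counit_D₂ : Coalgebra.counit (R := k) D₂ = 0
  counit_σ : Coalgebra.counit (R := k) ((σ : H)) = 1
  basis_generic : (∀ l : ℕ, 2 ≤ l → ¬ IsPrimitiveRoot q l) →
      ∃ b : Module.Basis (ℤ × ℕ × ℕ) k H,
        ∀ i j m, b (i, j, m) = ((σ ^ i : Hˣ) : H) * D₁ ^ j * D₂ ^ m
  basis_root : ∀ l : ℕ, 2 ≤ l → IsPrimitiveRoot q l →
      D₁ ^ l = 0 ∧ D₂ ^ l = 0 ∧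
      ∃ b : Module.Basis (ℤ × Fin l × Fin l) k H,
        ∀ i j m, b (i, j, m) = ((σ ^ i : Hˣ) : H) * D₁ ^ (j : ℕ) * D₂ ^ (m : ℕ)

variable (A : Type*) [Ring A] [Algebra k A]

/-- A left transposition of a (standard, flip-braided) bialgebra `H` on an algebra `A`. -/
structure IsTransposition [HopfAlgebra k H] (s : H ⊗[k] A ≃ₗ[k] A ⊗[k] H) : Prop where
  unit_H : ∀ a : A, s ((1 : H) ⊗ₜ[k] a) = a ⊗ₜ[k] (1 : H)
  mul_H : s.toLinearMap ∘ₗ (LinearMap.mul' k H).rTensor A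
      = (LinearMap.mul' k H).lTensor A ∘ₗ braidPast s.toLinearMap s.toLinearMap
  counit_compat : (TensorProduct.rid k A).toLinearMap
        ∘ₗ (Coalgebra.counit (R := k) (A := H)).lTensor A ∘ₗ s.toLinearMap
      = (TensorProduct.lid k A).toLinearMap ∘ₗ (Coalgebra.counit (R := k) (A := H)).rTensor A
  comul_compat : (Coalgebra.comul (R := k) (A := H)).lTensor A ∘ₗ s.toLinearMap
      = braidPast s.toLinearMap s.toLinearMap ∘ₗ (Coalgebra.comul (R := k) (A := H)).rTensor A
  unit_A : ∀ h : H, s (h ⊗ₜ[k] (1 : A)) = (1 : A) ⊗ₜ[k] h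
  mul_A : s.toLinearMap ∘ₗ (LinearMap.mul' k A).lTensor H
      = (LinearMap.mul' k A).rTensor H ∘ₗ braidUnder s.toLinearMap s.toLinearMap
  braid_compat : braidPast s.toLinearMap s.toLinearMap
        ∘ₗ (TensorProduct.comm k H H).toLinearMap.rTensor A
      = (TensorProduct.comm k H H).toLinearMap.lTensor A
        ∘ₗ braidPast s.toLinearMap s.toLinearMap

/-- The action `H ⊗ A → A` attached to an algebra morphism `H →ₐ Module.End k A`. -/
def actMap [HopfAlgebra k H] (ρ : H →ₐ[k] Module.End k A) : H ⊗[k] A →ₗ[k] A :=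
  TensorProduct.lift ρ.toLinearMap

/-- `(A, s)` is a left `H`-braided module algebra via the action `ρ`
(braid of `H` = flip). -/
structure IsModuleAlgebra [HopfAlgebra k H] (s : H ⊗[k] A ≃ₗ[k] A ⊗[k] H)
    (ρ : H →ₐ[k] Module.End k A) : Prop where
  compat_s : s.toLinearMap ∘ₗ (actMap k H A ρ).lTensor H
        ∘ₗ (TensorProduct.assoc k H H A).toLinearMap
      = (actMap k H A ρ).rTensor H
        ∘ₗ (TensorProduct.assoc k H A H).symm.toLinearMap
        ∘ₗ s.toLinearMap.lTensor H
        ∘ₗ (TensorProduct.assoc k H H A).toLinearMap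
        ∘ₗ (TensorProduct.comm k H H).toLinearMap.rTensor A
  mul_act : ∀ (h : H) (a b : A), ρ h (a * b)
      = (LinearMap.mul' k A
          ∘ₗ TensorProduct.map (actMap k H A ρ) (actMap k H A ρ)
          ∘ₗ midMap s.toLinearMap)
        ((Coalgebra.comul (R := k) h) ⊗ₜ[k] (a ⊗ₜ[k] b))
  one_act : ∀ h : H, ρ h (1 : A) = Coalgebra.counit (R := k) h • (1 : A)

/-- `s` is a *good* transposition. -/
def GoodTransposition {q : k} [HopfAlgebra k H] (hq : HqData k H q)
    (s : H ⊗[k] A ≃ₗ[k] A ⊗[k] H) : Prop :=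
  ∀ a : A, braidPast s.toLinearMap s.toLinearMap ((hq.D₁ ⊗ₜ[k] hq.D₂) ⊗ₜ[k] a)
    = a ⊗ₜ[k] (hq.D₁ ⊗ₜ[k] hq.D₂)

end Hq


section Crossed

variable {G : Type*} [Group G] {V : Type*} [AddCommGroup V] [Module k V]

variable (G) in
/-- `f` is a normal 2-cocycle on `G` with values in `kˣ`. -/
structure IsCocycle (f : G → G → kˣ) : Prop where
  one_left : ∀ g, f 1 g = 1
  one_right : ∀ g, f g 1 = 1
  cocycle : ∀ g h l, f g h * f (g * h) l = f g (h * l) * f h l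

variable (A : Type*) [Ring A] [Algebra k A]

/-- Axiomatisation of the crossed product `S(V) #_f G`:  `A` is generated by a copy of `V`
(with commuting elements, generating a copy of the symmetric algebra) and elements `w g`,
and is free as a module over the symmetric part with basis `{w g}`. -/
structure CrossedProduct (ρV : Representation k G V) (f : G → G → kˣ) where
  ι : V →ₗ[k] A
  w : G → A
  w_one : w 1 = 1
  ι_comm : ∀ v v', ι v * ι v' = ι v' * ι v
  w_ι : ∀ g v, w g * ι v = ι (ρV g v) * w g
  w_mul : ∀ g h, w g * w h = (f g h : k) • w (g * h)
  isBasis : ∀ {n : ℕ} (bV : Module.Basis (Fin n) k V),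
      ∃ bA : Module.Basis ((Fin n → ℕ) × G) k A,
        ∀ d g, bA (d, g) = (List.ofFn fun i => ι (bV i) ^ d i).prod * w g

namespace CrossedProduct

variable {A} {ρV : Representation k G V} {f : G → G → kˣ}

/-- The product in `A` of the images of a list of elements of `V`. -/
def mon (cp : CrossedProduct A ρV f) (l : List V) : A := (l.map cp.ι).prod

/-- `v₁ ⋯ v_{j-1}` : the image of the prefix of a monomial. -/
def pre (cp : CrossedProduct A ρV f) {m : ℕ} (v : Fin m → V) (j : Fin m) : A :=
  cp.mon ((List.ofFn v).take j)

/-- `v_{j+1} ⋯ v_m` : the image of the suffix of a monomial. -/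
def suf (cp : CrossedProduct A ρV f) {m : ℕ} (v : Fin m → V) (j : Fin m) : A :=
  cp.mon ((List.ofFn v).drop (j + 1))

/-- The subalgebra `S(V)` of the crossed product. -/
def SV (cp : CrossedProduct A ρV f) : Subalgebra k A :=
  Algebra.adjoin k (Set.range cp.ι)

/-- The subalgebra `S(W)` of the crossed product, for a subspace `W ≤ V`. -/
def SW (cp : CrossedProduct A ρV f) (W : Submodule k V) : Subalgebra k A :=
  Algebra.adjoin k (cp.ι '' (W : Set V))

end CrossedProduct

/-- A linear endomorphism of `V` is `k[G]`-linear if it commutes with the `G`-action. -/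
def GLinear (ρV : Representation k G V) (φ : V →ₗ[k] V) : Prop :=
  ∀ g v, φ (ρV g v) = ρV g (φ v)

variable (G) in
/-- `χ : G → kˣ` is a group homomorphism. -/
def IsCharacter (χ : G → kˣ) : Prop := ∀ g h, χ (g * h) = χ g * χ h

section Defs

variable {H : Type*} [Ring H] [HopfAlgebra k H] {q : k}
variable {ρV : Representation k G V} {f : G → G → kˣ}

/-- `s` is the (good) transposition of `H_q` on `A` associated with the automorphism `α`. -/
def AssocTransposition (hq : HqData k H q)
    (s : H ⊗[k] A ≃ₗ[k] A ⊗[k] H) (α : A ≃ₐ[k] A) : Prop :=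
  IsTransposition k H A s ∧ GoodTransposition k H A hq s
    ∧ (∀ a : A, s (hq.D₁ ⊗ₜ[k] a) = α a ⊗ₜ[k] hq.D₁)
    ∧ (∀ a : A, s (hq.D₂ ⊗ₜ[k] a) = α.symm a ⊗ₜ[k] hq.D₂)

variable {A}

/-- `ς` is the endomorphism of `A` determined by `ς̂` and `χ_ς`. -/
def SigmaDef (cp : CrossedProduct A ρV f) (ςhat : V →ₗ[k] V) (χς : G → kˣ)
    (ς : Module.End k A) : Prop :=
  ∀ (m : ℕ) (v : Fin m → V) (g : G),
    ς (cp.mon (List.ofFn v) * cp.w g)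
      = (χς g : k) • (cp.mon (List.ofFn fun i => ςhat (v i)) * cp.w g)

/-- `δ₁` is determined by `δ̂₁`, `δ̄₁` via the `(α, ς)`-twisted Leibniz formula. -/
def Delta1Def (cp : CrossedProduct A ρV f) (α : A ≃ₐ[k] A) (ς : Module.End k A)
    (δhat : V →ₗ[k] A) (δbar : G → A) (δ : Module.End k A) : Prop :=
  ∀ (m : ℕ) (v : Fin m → V) (g : G),
    δ (cp.mon (List.ofFn v) * cp.w g)
      = (∑ j : Fin m, α (cp.pre v j) * δhat (v j) * ς (cp.suf v j * cp.w g))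
        + α (cp.mon (List.ofFn v)) * δbar g

/-- `δ₂` is determined by `δ̂₂`, `δ̄₂` via the `(ς ∘ α⁻¹, id)`-twisted Leibniz formula. -/
def Delta2Def (cp : CrossedProduct A ρV f) (α : A ≃ₐ[k] A) (ς : Module.End k A)
    (δhat : V →ₗ[k] A) (δbar : G → A) (δ : Module.End k A) : Prop :=
  ∀ (m : ℕ) (v : Fin m → V) (g : G),
    δ (cp.mon (List.ofFn v) * cp.w g)
      = (∑ j : Fin m, ς (α.symm (cp.pre v j)) * δhat (v j) * (cp.suf v j * cp.w g))
        + ς (α.symm (cp.mon (List.ofFn v))) * δbar g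

/-- There is an `H_q`-braided module algebra structure on `(A, s)` with the
prescribed values of the action on `V` and on the `w_g`. -/
def HasHqModuleStructure (hq : HqData k H q) (cp : CrossedProduct A ρV f)
    (s : H ⊗[k] A ≃ₗ[k] A ⊗[k] H) (ςhat : V →ₗ[k] V) (χς : G → kˣ)
    (δhat1 δhat2 : V →ₗ[k] A) (δbar1 δbar2 : G → A) : Prop :=
  ∃ ρ : H →ₐ[k] Module.End k A, IsModuleAlgebra k H A s ρ
    ∧ (∀ v : V, ρ (hq.σ : H) (cp.ι v) = cp.ι (ςhat v))
    ∧ (∀ g : G, ρ (hq.σ : H) (cp.w g) = (χς g : k) • cp.w g)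
    ∧ (∀ v : V, ρ hq.D₁ (cp.ι v) = δhat1 v)
    ∧ (∀ g : G, ρ hq.D₁ (cp.w g) = δbar1 g)
    ∧ (∀ v : V, ρ hq.D₂ (cp.ι v) = δhat2 v)
    ∧ (∀ g : G, ρ hq.D₂ (cp.w g) = δbar2 g)

end Defs

end Crossed

end Paper

/-!
Goodness of `s` says that passing `D₁ ⊗ D₂` across `A` is the identity. Contracting the
last tensor factor against a functional equal to `1` on `D₂` shows that `s (D₂ ⊗ a)` is a pure
tensor `c a ⊗ D₂` with `s (D₁ ⊗ c a) = a ⊗ D₁`; together with the symmetric statement obtained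
from the braid axiom this gives `s (D₁ ⊗ a) = α a ⊗ D₁` for a linear automorphism `α`.
Compatibility of `s` with `Δ D₁ = D₁ ⊗ σ + 1 ⊗ D₁` then forces `s (σ ⊗ a) = a ⊗ σ`,
compatibility with `σ σ⁻¹ = 1` gives the same for `σ⁻¹`, and compatibility with the unit and
multiplication of `A` makes `α` an algebra map.
-/

namespace Paper

section VectorSpace

variable {k : Type*} [Field k] {M V : Type*} [AddCommGroup M] [Module k M]
  [AddCommGroup V] [Module k V]

theorem tmul_left_injective {v : V} (hv : v ≠ 0) :
    Function.Injective fun m : M => m ⊗ₜ[k] v := by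
  obtain ⟨φ, hφ⟩ := Module.Projective.exists_dual_eq_one k hv
  intro m m' h
  simpa [hφ] using congrArg (TensorProduct.rid k M ∘ φ.lTensor M) h

theorem tmul_right_injective {v : V} (hv : v ≠ 0) :
    Function.Injective fun m : M => v ⊗ₜ[k] m := by
  obtain ⟨φ, hφ⟩ := Module.Projective.exists_dual_eq_one k hv
  intro m m' h
  simpa [hφ] using congrArg (TensorProduct.lid k M ∘ φ.rTensor M) h

end VectorSpace

section BraidPast

variable {k : Type*} [Field k] {M N P M' N' : Type*}
  [AddCommMonoid M] [AddCommMonoid N] [AddCommMonoid P] [AddCommMonoid M'] [AddCommMonoid N']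
  [Module k M] [Module k N] [Module k P] [Module k M'] [Module k N']

theorem braidPast_tmul (f : N ⊗[k] P →ₗ[k] P ⊗[k] N') (g : M ⊗[k] P →ₗ[k] P ⊗[k] M')
    (m : M) (n : N) (p : P) :
    braidPast f g ((m ⊗ₜ[k] n) ⊗ₜ[k] p)
      = TensorProduct.assoc k P M' N'
          ((g ∘ₗ TensorProduct.mk k M P m).rTensor N' (f (n ⊗ₜ p))) := by
  simp only [braidPast, LinearMap.coe_comp, Function.comp_apply, LinearEquiv.coe_coe,
    TensorProduct.assoc_tmul, LinearMap.lTensor_tmul]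
  congr 1
  induction f (n ⊗ₜ p) using TensorProduct.induction_on with
  | zero => simp
  | tmul p' n' => simp
  | add u v hu hv => simp only [TensorProduct.tmul_add, map_add, hu, hv]

theorem braidPast_tmul_of_apply_tmul (f : N ⊗[k] P →ₗ[k] P ⊗[k] N')
    (g : M ⊗[k] P →ₗ[k] P ⊗[k] M) {m : M} {e : P →ₗ[k] P} (hm : ∀ p, g (m ⊗ₜ p) = e p ⊗ₜ m)
    (n : N) (p : P) :
    braidPast f g ((m ⊗ₜ[k] n) ⊗ₜ[k] p)
      = TensorProduct.map e (TensorProduct.mk k M N' m) (f (n ⊗ₜ p)) := by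
  rw [braidPast_tmul]
  induction f (n ⊗ₜ p) using TensorProduct.induction_on with
  | zero => simp
  | tmul p' n' => simp [hm]
  | add u v hu hv => simp only [map_add, hu, hv]

end BraidPast

section Good

variable {k : Type*} [Field k] {H A : Type*} [AddCommGroup H] [Module k H]
  [AddCommGroup A] [Module k A]

theorem exists_apply_tmul_of_braidPast (s : H ⊗[k] A ≃ₗ[k] A ⊗[k] H) {D D' : H}
    (hD : D ≠ 0) (hD' : D' ≠ 0)
    (hgood : ∀ a : A, braidPast s.toLinearMap s.toLinearMap ((D ⊗ₜ[k] D') ⊗ₜ[k] a)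
      = a ⊗ₜ[k] (D ⊗ₜ[k] D')) :
    ∃ c : A →ₗ[k] A, (∀ a, s (D' ⊗ₜ a) = c a ⊗ₜ D') ∧ ∀ a, s (D ⊗ₜ c a) = a ⊗ₜ D := by
  set L := s.toLinearMap ∘ₗ TensorProduct.mk k H A D
  have hL : Function.Injective L := s.injective.comp (tmul_right_injective hD)
  have hsD' : ∀ a, L.rTensor H (s (D' ⊗ₜ a)) = (a ⊗ₜ D) ⊗ₜ D' := fun a => by
    simpa [braidPast_tmul] using congrArg (TensorProduct.assoc k A H H).symm (hgood a)
  obtain ⟨φ, hφ⟩ := Module.Projective.exists_dual_eq_one k hD'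
  set π := (TensorProduct.rid k A).toLinearMap ∘ₗ φ.lTensor A
  have hπ : ∀ x, L (π x) = TensorProduct.rid k _ (φ.lTensor _ (L.rTensor H x)) := fun x => by
    induction x using TensorProduct.induction_on with
    | zero => simp
    | tmul a h => simp [π]
    | add u v hu hv => simp only [map_add, hu, hv]
  have hLc : ∀ a, L (π (s (D' ⊗ₜ a))) = a ⊗ₜ D := fun a => by simp [hπ, hsD', hφ]
  refine ⟨π ∘ₗ s.toLinearMap ∘ₗ TensorProduct.mk k H A D', fun a => ?_, hLc⟩
  apply Module.Flat.rTensor_preserves_injective_linearMap L hL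
  simp [hsD', hLc]

theorem exists_linearEquiv_of_braidPast (s : H ⊗[k] A ≃ₗ[k] A ⊗[k] H) {D D' : H}
    (hD : D ≠ 0) (hD' : D' ≠ 0)
    (hgood : ∀ a : A, braidPast s.toLinearMap s.toLinearMap ((D ⊗ₜ[k] D') ⊗ₜ[k] a)
      = a ⊗ₜ[k] (D ⊗ₜ[k] D'))
    (hgood' : ∀ a : A, braidPast s.toLinearMap s.toLinearMap ((D' ⊗ₜ[k] D) ⊗ₜ[k] a)
      = a ⊗ₜ[k] (D' ⊗ₜ[k] D)) :
    ∃ α : A ≃ₗ[k] A, (∀ a, s (D ⊗ₜ a) = α a ⊗ₜ D) ∧ ∀ a, s (D' ⊗ₜ a) = α.symm a ⊗ₜ D' := by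
  obtain ⟨c, hc, hDc⟩ := exists_apply_tmul_of_braidPast s hD hD' hgood
  obtain ⟨d, hd, hD'd⟩ := exists_apply_tmul_of_braidPast s hD' hD hgood'
  have hdc : ∀ a, d (c a) = a := fun a =>
    tmul_left_injective (k := k) hD (by dsimp only; rw [← hd, hDc])
  have hcd : ∀ a, c (d a) = a := fun a =>
    tmul_left_injective (k := k) hD' (by dsimp only; rw [← hc, hD'd])
  exact ⟨.ofLinearMap d c (LinearMap.ext hdc) (LinearMap.ext hcd), hd, hc⟩

end Good

namespace IsTransposition

variable {k : Type*} [Field k] {H : Type*} [Ring H] [HopfAlgebra k H]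
  {A : Type*} [Ring A] [Algebra k A] {s : H ⊗[k] A ≃ₗ[k] A ⊗[k] H}

theorem braidPast_comm (hs : IsTransposition k H A s) {x y : H} {a : A}
    (h : braidPast s.toLinearMap s.toLinearMap ((x ⊗ₜ[k] y) ⊗ₜ[k] a) = a ⊗ₜ[k] (x ⊗ₜ[k] y)) :
    braidPast s.toLinearMap s.toLinearMap ((y ⊗ₜ[k] x) ⊗ₜ[k] a) = a ⊗ₜ[k] (y ⊗ₜ[k] x) := by
  have hbc := LinearMap.congr_fun hs.braid_compat ((y ⊗ₜ[k] x) ⊗ₜ[k] a)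
  simp only [LinearMap.coe_comp, Function.comp_apply, LinearMap.rTensor_tmul,
    LinearEquiv.coe_coe, TensorProduct.comm_tmul, h] at hbc
  apply Module.Flat.lTensor_preserves_injective_linearMap _ (TensorProduct.comm k H H).injective
  simpa using hbc.symm

theorem apply_tmul_of_comul_eq (hs : IsTransposition k H A s) {D g : H} (hD : D ≠ 0)
    {α : A ≃ₗ[k] A} (hα : ∀ a, s (D ⊗ₜ a) = α a ⊗ₜ D)
    (hΔ : Coalgebra.comul (R := k) D = D ⊗ₜ[k] g + 1 ⊗ₜ[k] D) (a : A) :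
    s (g ⊗ₜ a) = a ⊗ₜ g := by
  have hcomul := LinearMap.congr_fun hs.comul_compat (D ⊗ₜ[k] a)
  simp only [LinearMap.coe_comp, Function.comp_apply, LinearMap.rTensor_tmul,
    LinearEquiv.coe_coe, hα, LinearMap.lTensor_tmul, hΔ, TensorProduct.tmul_add,
    TensorProduct.add_tmul, map_add] at hcomul
  rw [braidPast_tmul_of_apply_tmul _ _ (e := α.toLinearMap) hα,
    braidPast_tmul_of_apply_tmul _ _ (e := LinearMap.id) hs.unit_H] at hcomul
  simp only [LinearEquiv.coe_coe, hα, TensorProduct.map_tmul, LinearMap.id_apply,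
    TensorProduct.mk_apply] at hcomul
  apply TensorProduct.map_injective_of_flat_flat _ (TensorProduct.mk k H H D) α.injective
    (tmul_right_injective hD)
  simpa using (add_right_cancel hcomul).symm

theorem apply_inv_tmul (hs : IsTransposition k H A s) {u : Hˣ}
    (hu : ∀ a, s ((u : H) ⊗ₜ a) = a ⊗ₜ (u : H)) (a : A) :
    s (((u⁻¹ : Hˣ) : H) ⊗ₜ a) = a ⊗ₜ ((u⁻¹ : Hˣ) : H) := by
  have hmul := LinearMap.congr_fun hs.mul_H (((u : H) ⊗ₜ[k] ((u⁻¹ : Hˣ) : H)) ⊗ₜ[k] a)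
  simp only [LinearMap.coe_comp, Function.comp_apply, LinearMap.rTensor_tmul,
    LinearEquiv.coe_coe, LinearMap.mul'_apply, Units.mul_inv, hs.unit_H,
    braidPast_tmul_of_apply_tmul _ _ (e := LinearMap.id) hu] at hmul
  have hmulLeft : (LinearMap.mul' k H).lTensor A ∘ₗ
      TensorProduct.map LinearMap.id (TensorProduct.mk k H H u)
        = (LinearMap.mulLeft k (u : H)).lTensor A :=
    TensorProduct.ext' fun _ _ => by simp
  have hu_inj : Function.Injective (LinearMap.mulLeft k (u : H)) :=
    fun _ _ h => u.isUnit.mul_left_cancel h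
  apply Module.Flat.lTensor_preserves_injective_linearMap _ hu_inj
  rw [← hmulLeft, LinearMap.comp_apply, ← hmul]
  simp

theorem map_one_of_apply_tmul (hs : IsTransposition k H A s) {D : H} (hD : D ≠ 0)
    {e : A → A} (he : ∀ a, s (D ⊗ₜ a) = e a ⊗ₜ D) : e 1 = 1 :=
  tmul_left_injective (k := k) hD (by dsimp only; rw [← he, hs.unit_A])

theorem map_mul_of_apply_tmul (hs : IsTransposition k H A s) {D : H} (hD : D ≠ 0)
    {e : A → A} (he : ∀ a, s (D ⊗ₜ a) = e a ⊗ₜ D) (a b : A) : e (a * b) = e a * e b := by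
  have hmul := LinearMap.congr_fun hs.mul_A (D ⊗ₜ[k] (a ⊗ₜ[k] b))
  simp only [braidUnder, LinearMap.coe_comp, Function.comp_apply, LinearEquiv.coe_coe,
    LinearMap.lTensor_tmul, LinearMap.rTensor_tmul, LinearMap.mul'_apply,
    TensorProduct.assoc_symm_tmul, TensorProduct.assoc_tmul, he] at hmul
  exact tmul_left_injective hD hmul

end IsTransposition

namespace HqData

variable {k : Type*} [Field k] {H : Type*} [Ring H] [HopfAlgebra k H] {q : k}

theorem D₁_ne_zero_and_D₂_ne_zero (hq : HqData k H q) : hq.D₁ ≠ 0 ∧ hq.D₂ ≠ 0 := by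
  by_cases hgen : ∀ l : ℕ, 2 ≤ l → ¬ IsPrimitiveRoot q l
  · obtain ⟨b, hb⟩ := hq.basis_generic hgen
    exact ⟨by simpa [hb] using b.ne_zero (0, 1, 0), by simpa [hb] using b.ne_zero (0, 0, 1)⟩
  · push Not at hgen
    obtain ⟨l, hl, hprim⟩ := hgen
    obtain ⟨-, -, b, hb⟩ := hq.basis_root l hl hprim
    exact ⟨by simpa [hb] using b.ne_zero (0, ⟨1, by omega⟩, ⟨0, by omega⟩),
      by simpa [hb] using b.ne_zero (0, ⟨0, by omega⟩, ⟨1, by omega⟩)⟩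

end HqData

end Paper

open Paper in
theorem statement_3_general {k : Type*} [Field k] {q : k}
    {H : Type*} [Ring H] [HopfAlgebra k H] (hq : HqData k H q)
    {A : Type*} [Ring A] [Algebra k A]
    (s : H ⊗[k] A ≃ₗ[k] A ⊗[k] H) (hs : IsTransposition k H A s)
    (hgood : GoodTransposition k H A hq s) :
    (∀ a : A, s ((hq.σ : H) ⊗ₜ[k] a) = a ⊗ₜ[k] (hq.σ : H))
    ∧ (∀ a : A, s (((hq.σ⁻¹ : Hˣ) : H) ⊗ₜ[k] a) = a ⊗ₜ[k] ((hq.σ⁻¹ : Hˣ) : H))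
    ∧ ∃ α : A ≃ₗ[k] A, (∀ a : A, s (hq.D₁ ⊗ₜ[k] a) = α a ⊗ₜ[k] hq.D₁)
        ∧ α 1 = 1 ∧ ∀ a b : A, α (a * b) = α a * α b := by
  obtain ⟨hD₁, hD₂⟩ := hq.D₁_ne_zero_and_D₂_ne_zero
  obtain ⟨α, hα, -⟩ :=
    exists_linearEquiv_of_braidPast s hD₁ hD₂ hgood fun a => hs.braidPast_comm (hgood a)
  have hσ := hs.apply_tmul_of_comul_eq hD₁ hα hq.comul_D₁
  exact ⟨hσ, hs.apply_inv_tmul hσ, α, hα, hs.map_one_of_apply_tmul hD₁ hα,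
    hs.map_mul_of_apply_tmul hD₁ hα⟩

open Paper in
/-- A good transposition of `H_q` fixes `σ^{±1}` and its associated
map `α` is an algebra automorphism. -/
theorem statement_3 {k : Type*} [Field k] {q : k} (hq0 : q ≠ 0)
    {H : Type*} [Ring H] [HopfAlgebra k H] (hq : HqData k H q)
    {A : Type*} [Ring A] [Algebra k A]
    (s : H ⊗[k] A ≃ₗ[k] A ⊗[k] H) (hs : IsTransposition k H A s)
    (hgood : GoodTransposition k H A hq s) :
    (∀ a : A, s ((hq.σ : H) ⊗ₜ[k] a) = a ⊗ₜ[k] (hq.σ : H))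
    ∧ (∀ a : A, s (((hq.σ⁻¹ : Hˣ) : H) ⊗ₜ[k] a) = a ⊗ₜ[k] ((hq.σ⁻¹ : Hˣ) : H))
    ∧ ∃ α : A ≃ₗ[k] A, (∀ a : A, s (hq.D₁ ⊗ₜ[k] a) = α a ⊗ₜ[k] hq.D₁)
        ∧ α 1 = 1 ∧ ∀ a b : A, α (a * b) = α a * α b :=
  statement_3_general hq s hs hgood
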